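/- Let W = {(W_i, ω_i)}_{i∈I} be a fusion frame for H with each dim W_i < ∞. Then e(W) = Σ_{i∈I} (dim W_i − ω_i² · trace(π_{W_i} S_W^{-1} π_{W_i})). -/

import Mathlib

noncomputable section
open scoped ENNReal

/-- `W = {(W i, ω i)}` is a fusion frame for `H`. -/
def IsFusionFrame {H : Type} [NormedAddCommGroup H] [InnerProductSpace ℂ H]
    {ι : Type} (W : ι → Submodule ℂ H) [∀ i, (W i).HasOrthogonalProjection]
    (ω : ι → ℝ) : Prop :=
  (∀ i, 0 < ω i) ∧ ∃ A B : ℝ, 0 < A ∧ A ≤ B ∧ ∀ f : H,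
    (A * ‖f‖ ^ 2 ≤ ∑' i, ω i ^ 2 * ‖(Submodule.orthogonalProjectionOnto (W i) f : H)‖ ^ 2) ∧
    (∑' i, ω i ^ 2 * ‖(Submodule.orthogonalProjectionOnto (W i) f : H)‖ ^ 2 ≤ B * ‖f‖ ^ 2)

/-- `W = {(W i, ω i)}` is a fusion Riesz basis for `H`. -/
def IsFusionRieszBasis {H : Type} [NormedAddCommGroup H] [InnerProductSpace ℂ H]
    {ι : Type} (W : ι → Submodule ℂ H) (ω : ι → ℝ) : Prop :=
  (∀ i, 0 < ω i) ∧ (⨆ i, W i).topologicalClosure = ⊤ ∧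
  ∃ C D : ℝ, 0 < C ∧ C ≤ D ∧ ∀ (s : Finset ι) (f : ∀ i, W i),
    (C * ∑ j ∈ s, ‖(f j : H)‖ ^ 2 ≤ ‖∑ j ∈ s, ω j • (f j : H)‖ ^ 2) ∧
    (‖∑ j ∈ s, ω j • (f j : H)‖ ^ 2 ≤ D * ∑ j ∈ s, ‖(f j : H)‖ ^ 2)

/-! With `T` the synthesis operator, `T T† = S`, so `1 - T† S⁻¹ T` is the orthogonal projection
`P` onto `ker T`. The vectors `single i (bᵢ j)`, for orthonormal bases `bᵢ` of the `W i`, form a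
Parseval frame of `⨁ W i`, so `∑ ‖P (single i (bᵢ j))‖²` is the trace of `P`, i.e. `dim ker T`.
On the other hand `‖P (single i (bᵢ j))‖² = 1 - ω i ^ 2 ⟪bᵢ j, S⁻¹ bᵢ j⟫`, and summing over `j`
gives the `i`-th summand. -/

open scoped InnerProductSpace InnerProduct

lemma lp.ofReal_norm_sq_eq_tsum {ι : Type*} {G : ι → Type*} [∀ i, NormedAddCommGroup (G i)]
    (f : lp G 2) : ENNReal.ofReal (‖f‖ ^ 2) = ∑' i, ENNReal.ofReal (‖f i‖ ^ 2) := by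
  have h := lp.hasSum_norm (p := 2) (by norm_num) f
  simp only [ENNReal.toReal_ofNat, Real.rpow_ofNat] at h
  rw [h.tsum_eq.symm, ENNReal.ofReal_tsum_of_nonneg (fun _ ↦ by positivity) h.summable]

section ParsevalFrame

variable {𝕜 E : Type*} [RCLike 𝕜] [NormedAddCommGroup E] [InnerProductSpace 𝕜 E]

lemma HilbertBasis.ofReal_norm_sq_eq_tsum {ι : Type*} (b : HilbertBasis ι 𝕜 E) (x : E) :
    ENNReal.ofReal (‖x‖ ^ 2) = ∑' i, ENNReal.ofReal (‖⟪b i, x⟫_𝕜‖ ^ 2) := by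
  rw [← b.repr.norm_map x, lp.ofReal_norm_sq_eq_tsum]
  simp only [b.repr_apply_apply]

lemma HilbertBasis.toENat_rank_eq_card {ι : Type*} (b : HilbertBasis ι 𝕜 E) :
    (Module.rank 𝕜 E).toENat = ENat.card ι := by
  cases finite_or_infinite ι with
  | inl hfin =>
    have := Fintype.ofFinite ι
    rw [rank_eq_card_basis b.toOrthonormalBasis.toBasis, ENat.card_eq_coe_fintype_card]
    simp
  | inr hinf =>
    rw [ENat.card_eq_top_of_infinite, Cardinal.toENat_eq_top]
    exact b.orthonormal.linearIndependent.aleph0_le_rank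

lemma tsum_ofReal_norm_sq_orthogonalProjectionOnto_eq_rank {σ : Type*} {e : σ → E}
    (he : ∀ x, ENNReal.ofReal (‖x‖ ^ 2) = ∑' s, ENNReal.ofReal (‖⟪e s, x⟫_𝕜‖ ^ 2))
    (K : Submodule 𝕜 E) [CompleteSpace K] :
    ∑' s, ENNReal.ofReal (‖K.orthogonalProjectionOnto (e s)‖ ^ 2) = (Module.rank 𝕜 K).toENat := by
  obtain ⟨w, b, -⟩ := exists_hilbertBasis 𝕜 K
  calc ∑' s, ENNReal.ofReal (‖K.orthogonalProjectionOnto (e s)‖ ^ 2)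
      = ∑' s, ∑' f, ENNReal.ofReal (‖⟪e s, (b f : E)⟫_𝕜‖ ^ 2) := by
        simp only [b.ofReal_norm_sq_eq_tsum, K.inner_orthogonalProjectionOnto_eq_of_mem_left,
          norm_inner_symm]
    _ = ∑' f, ENNReal.ofReal (‖(b f : E)‖ ^ 2) := by rw [ENNReal.tsum_comm]; simp only [← he]
    _ = ∑' _ : w, 1 := tsum_congr fun f ↦ by
        rw [Submodule.norm_coe, b.orthonormal.1 f]; simp
    _ = (Module.rank 𝕜 K).toENat := by rw [ENNReal.tsum_one, b.toENat_rank_eq_card]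

lemma lp.ofReal_norm_sq_eq_tsum_inner_single {ι : Type*} [DecidableEq ι]
    {G : ι → Type*} [∀ i, NormedAddCommGroup (G i)] [∀ i, InnerProductSpace 𝕜 (G i)]
    {κ : ι → Type*} [∀ i, Fintype (κ i)] (b : ∀ i, OrthonormalBasis (κ i) 𝕜 (G i))
    (x : lp G 2) :
    ENNReal.ofReal (‖x‖ ^ 2) =
      ∑' s : Σ i, κ i, ENNReal.ofReal (‖⟪lp.single 2 s.1 (b s.1 s.2), x⟫_𝕜‖ ^ 2) := by
  simp only [ENNReal.tsum_sigma', lp.inner_single_left, lp.ofReal_norm_sq_eq_tsum x]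
  refine tsum_congr fun i ↦ ?_
  rw [tsum_fintype, ← ENNReal.ofReal_sum_of_nonneg fun _ _ ↦ by positivity,
    (b i).sum_sq_norm_inner_right]

end ParsevalFrame

section KernelProjection

variable {𝕜 E F : Type*} [RCLike 𝕜] [NormedAddCommGroup E] [InnerProductSpace 𝕜 E]
  [NormedAddCommGroup F] [InnerProductSpace 𝕜 F] [CompleteSpace E] [CompleteSpace F]

open ContinuousLinearMap

lemma starProjection_ker_eq_sub (T : E →L[𝕜] F) (S : F ≃L[𝕜] F) (hS : ∀ y, T ((T†) y) = S y)
    (x : E) : (LinearMap.ker T.toLinearMap).starProjection x = x - (T†) (S.symm (T x)) := by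
  refine Submodule.eq_starProjection_of_mem_orthogonal ?_ ?_
  · simp [LinearMap.mem_ker, hS]
  · rw [sub_sub_cancel, T.orthogonal_ker]
    exact Submodule.le_topologicalClosure _ ⟨_, rfl⟩

lemma norm_sq_orthogonalProjectionOnto_ker (T : E →L[𝕜] F) (S : F ≃L[𝕜] F)
    (hS : ∀ y, T ((T†) y) = S y) (x : E) :
    ‖(LinearMap.ker T.toLinearMap).orthogonalProjectionOnto x‖ ^ 2 =
      ‖x‖ ^ 2 - RCLike.re ⟪S.symm (T x), T x⟫_𝕜 := by
  rw [← Submodule.re_inner_starProjection_eq_normSq, starProjection_ker_eq_sub T S hS,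
    inner_sub_left, adjoint_inner_left, map_sub, inner_self_eq_norm_sq]

end KernelProjection

section Synthesis

variable {H : Type} [NormedAddCommGroup H] [InnerProductSpace ℂ H] {ι : Type} [DecidableEq ι]
  {W : ι → Submodule ℂ H} {ω : ι → ℝ} {TW : lp (fun i => ↥(W i)) 2 →L[ℂ] H}

lemma synthesis_apply_single (hTW : ∀ g : lp (fun i => ↥(W i)) 2, TW g = ∑' i, ω i • (g i : H))
    (i : ι) (v : W i) : TW (lp.single 2 i v) = ω i • (v : H) := by
  rw [hTW, tsum_eq_single i fun j hj ↦ by simp [Pi.single_eq_of_ne hj]]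
  simp

variable [CompleteSpace H] [∀ i, CompleteSpace (W i)]

lemma adjoint_synthesis_apply (hTW : ∀ g : lp (fun i => ↥(W i)) 2, TW g = ∑' i, ω i • (g i : H))
    (f : H) (i : ι) : (TW†) f i = ω i • (W i).orthogonalProjectionOnto f := by
  refine ext_inner_right ℂ fun v ↦ ?_
  rw [← lp.inner_single_right, ContinuousLinearMap.adjoint_inner_left, synthesis_apply_single hTW,
    RCLike.real_smul_eq_coe_smul (K := ℂ), RCLike.real_smul_eq_coe_smul (K := ℂ), inner_smul_right,
    inner_smul_left, RCLike.conj_ofReal, Submodule.inner_orthogonalProjectionOnto_eq_of_mem_right]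

lemma synthesis_comp_adjoint_apply
    (hTW : ∀ g : lp (fun i => ↥(W i)) 2, TW g = ∑' i, ω i • (g i : H)) (f : H) :
    TW ((TW†) f) = ∑' i, ω i ^ 2 • ((W i).orthogonalProjectionOnto f : H) := by
  simp only [hTW, adjoint_synthesis_apply hTW, Submodule.coe_smul_of_tower, smul_smul, sq]

lemma sum_norm_sq_orthogonalProjectionOnto_ker_single (i : ι) [FiniteDimensional ℂ (W i)]
    (hTW : ∀ g : lp (fun i => ↥(W i)) 2, TW g = ∑' i, ω i • (g i : H))
    (S : H ≃L[ℂ] H) (hS : ∀ f, TW ((TW†) f) = S f) :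
    ∑ j, ‖(LinearMap.ker TW.toLinearMap).orthogonalProjectionOnto
        (lp.single 2 i (stdOrthonormalBasis ℂ (W i) j))‖ ^ 2 =
      (Module.finrank ℂ (W i) : ℝ) - ω i ^ 2 *
        (LinearMap.trace ℂ (W i) (((W i).orthogonalProjectionOnto.comp
          ((S.symm : H →L[ℂ] H).comp (W i).subtypeL)).toLinearMap)).re := by
  set b := stdOrthonormalBasis ℂ (W i)
  have h (j) : ‖(LinearMap.ker TW.toLinearMap).orthogonalProjectionOnto (lp.single 2 i (b j))‖ ^ 2
      = 1 - ω i ^ 2 * RCLike.re ⟪b j, (W i).orthogonalProjectionOnto (S.symm (b j))⟫_ℂ := by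
    rw [norm_sq_orthogonalProjectionOnto_ker TW S hS, synthesis_apply_single hTW,
      lp.norm_single (by norm_num), Submodule.inner_orthogonalProjectionOnto_eq_of_mem_left, b.orthonormal.1 j,
      RCLike.real_smul_eq_coe_smul (K := ℂ), map_smul, inner_smul_left, inner_smul_right,
      RCLike.conj_ofReal, ← mul_assoc, ← RCLike.ofReal_mul, RCLike.re_ofReal_mul, inner_re_symm,
      one_pow, sq]
  rw [LinearMap.trace_eq_sum_inner _ b, Finset.sum_congr rfl fun j _ ↦ h j, Finset.sum_sub_distrib]
  simp [Finset.mul_sum]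

end Synthesis

theorem excess_eq_tsum_dim_sub_trace_general
    {H : Type} [NormedAddCommGroup H] [InnerProductSpace ℂ H] [CompleteSpace H]
    {ι : Type} (W : ι → Submodule ℂ H)
    [∀ i, FiniteDimensional ℂ (W i)] (ω : ι → ℝ)
    -- the fusion frame operator `S_W` (an invertible operator):
    (S : H ≃L[ℂ] H)
    (hS : ∀ f : H, S f = ∑' i, ω i ^ 2 • (Submodule.orthogonalProjectionOnto (W i) f : H))
    -- the synthesis operator:
    (TW : lp (fun i => ↥(W i)) 2 →L[ℂ] H)
    (hTW : ∀ g : lp (fun i => ↥(W i)) 2, TW g = ∑' i, ω i • ((g i : H))) :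
    ((Cardinal.toENat (Module.rank ℂ (LinearMap.ker TW.toLinearMap)) : ℕ∞) : ℝ≥0∞) =
      ∑' i : ι, ENNReal.ofReal
        ((Module.finrank ℂ (W i) : ℝ) - ω i ^ 2 *
          (LinearMap.trace ℂ (W i)
            (((Submodule.orthogonalProjectionOnto (W i)).comp
              ((S.symm : H →L[ℂ] H).comp ((W i).subtypeL))).toLinearMap)).re) := by
  classical
  have hTS (f : H) : TW ((TW†) f) = S f := by rw [synthesis_comp_adjoint_apply hTW, hS]
  rw [← tsum_ofReal_norm_sq_orthogonalProjectionOnto_eq_rank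
      (lp.ofReal_norm_sq_eq_tsum_inner_single fun i ↦ stdOrthonormalBasis ℂ (W i)),
    ENNReal.tsum_sigma']
  refine tsum_congr fun i ↦ ?_
  rw [tsum_fintype, ← ENNReal.ofReal_sum_of_nonneg fun _ _ ↦ by positivity,
    sum_norm_sq_orthogonalProjectionOnto_ker_single i hTW S hTS]

/-- `e(W) = ∑ᵢ (dim W i − ω i ^ 2 · trace (π_{W i} S_W⁻¹ π_{W i}))`,
where the trace is computed as the trace of the endomorphism of `W i`
obtained by restricting `π_{W i} ∘ S_W⁻¹` to `W i`. -/
theorem excess_eq_tsum_dim_sub_trace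
    {H : Type} [NormedAddCommGroup H] [InnerProductSpace ℂ H] [CompleteSpace H]
    {ι : Type} (W : ι → Submodule ℂ H) [∀ i, CompleteSpace (W i)]
    [∀ i, FiniteDimensional ℂ (W i)] (ω : ι → ℝ)
    (hW : IsFusionFrame W ω)
    -- the fusion frame operator `S_W` (an invertible operator):
    (S : H ≃L[ℂ] H)
    (hS : ∀ f : H, S f = ∑' i, ω i ^ 2 • (Submodule.orthogonalProjectionOnto (W i) f : H))
    -- the synthesis operator:
    (TW : lp (fun i => ↥(W i)) 2 →L[ℂ] H)
    (hTW : ∀ g : lp (fun i => ↥(W i)) 2, TW g = ∑' i, ω i • ((g i : H))) :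
    ((Cardinal.toENat (Module.rank ℂ (LinearMap.ker TW.toLinearMap)) : ℕ∞) : ℝ≥0∞) =
      ∑' i : ι, ENNReal.ofReal
        ((Module.finrank ℂ (W i) : ℝ) - ω i ^ 2 *
          (LinearMap.trace ℂ (W i)
            (((Submodule.orthogonalProjectionOnto (W i)).comp
              ((S.symm : H →L[ℂ] H).comp ((W i).subtypeL))).toLinearMap)).re) :=
  excess_eq_tsum_dim_sub_trace_general W ω S hS TW hTW
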